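/- arXiv:gr-qc/0211106 — 3 statements merged into one kernel-verified Lean document; each statement's English description precedes it below -/
import Mathlib

section
/- Let G be a compact topological group equipped with its Borel σ-algebra and let μ be the normalized Haar probability measure on G. Let ρ and τ be continuous unitary representations of G on finite-dimensional complex inner product spaces V and W respectively, and let χ_τ(g) = tr τ(g) denote the character of τ. Then the operator A = ∫_G χ_τ(g) · ρ(g) dμ(g) on V is positive: A is self-adjoint and ⟨v, A v⟩ is a nonnegative real number for every v ∈ V. -/
open MeasureTheory
open scoped InnerProductSpace ComplexInnerProductSpace ComplexOrder TensorProduct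

/-!
By left invariance, `∫ S = ∫∫ S (h⁻¹ * g) dμ(g) dμ(h)` for any `S : G → ℂ`. If moreover
`S (h⁻¹ * g) = ⟪F h, F g⟫` for an integrable `F : G → E`, this double integral equals
`⟪∫ F, ∫ F⟫ ≥ 0`. For `S g = χ_τ(g) ⟪v, ρ g v⟫` unitarity provides such an `F`, namely
`F g = (τ g (b i) ⊗ ρ g v)ᵢ` for an orthonormal basis `b` of `W`; and `S` integrates to
`⟪v, A v⟫`. Finally, a complex operator with nonnegative quadratic form is self-adjoint.
-/

section PositiveType

variable {G E : Type*} [Group G] [MeasurableSpace G] [MeasurableMul G]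
  {μ : Measure G} [μ.IsMulLeftInvariant] [IsProbabilityMeasure μ]
  [NormedAddCommGroup E] [InnerProductSpace ℂ E] [CompleteSpace E]

theorem integral_eq_inner_integral_of_inv_mul_eq_inner {S : G → ℂ} {F : G → E}
    (hF : Integrable F μ) (hS : ∀ h g, S (h⁻¹ * g) = ⟪F h, F g⟫) :
    ∫ g, S g ∂μ = ⟪∫ g, F g ∂μ, ∫ g, F g ∂μ⟫ := by
  calc ∫ g, S g ∂μ = ∫ h, ∫ g, S (h⁻¹ * g) ∂μ ∂μ := by simp [integral_mul_left_eq_self]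
    _ = ∫ h, ⟪F h, ∫ g, F g ∂μ⟫ ∂μ := by simp_rw [hS, integral_inner hF]
    _ = _ := by simp_rw [← inner_conj_symm (F _), integral_conj, integral_inner hF,
      inner_conj_symm]

theorem integral_nonneg_of_inv_mul_eq_inner {S : G → ℂ} {F : G → E}
    (hF : Integrable F μ) (hS : ∀ h g, S (h⁻¹ * g) = ⟪F h, F g⟫) :
    0 ≤ ∫ g, S g ∂μ := by
  rw [integral_eq_inner_integral_of_inv_mul_eq_inner hF hS, inner_self_eq_norm_sq_to_K]
  positivity

end PositiveType

theorem inner_map_inv_mul_apply {𝕜 G E : Type*} [RCLike 𝕜] [Group G] [NormedAddCommGroup E]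
    [InnerProductSpace 𝕜 E] {π : G →* (E →L[𝕜] E)}
    (hπ : ∀ (g : G) (x y : E), ⟪π g x, π g y⟫_𝕜 = ⟪x, y⟫_𝕜) (h g : G) (x y : E) :
    ⟪x, π (h⁻¹ * g) y⟫_𝕜 = ⟪π h x, π g y⟫_𝕜 := by
  rw [← hπ h, ← mul_apply_eq_comp, ← map_mul, mul_inv_cancel_left]

theorem trace_map_inv_mul {𝕜 G E ι : Type*} [RCLike 𝕜] [Group G] [NormedAddCommGroup E]
    [InnerProductSpace 𝕜 E] [Fintype ι] {π : G →* (E →L[𝕜] E)}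
    (hπ : ∀ (g : G) (x y : E), ⟪π g x, π g y⟫_𝕜 = ⟪x, y⟫_𝕜) (b : OrthonormalBasis ι 𝕜 E) (h g : G) :
    LinearMap.trace 𝕜 E (π (h⁻¹ * g) : E →ₗ[𝕜] E) = ∑ i, ⟪π h (b i), π g (b i)⟫_𝕜 := by
  simp_rw [LinearMap.trace_eq_sum_inner _ b, ContinuousLinearMap.coe_coe,
    inner_map_inv_mul_apply hπ]

theorem ContinuousLinearMap.isPositive_of_inner_nonneg {E : Type*} [NormedAddCommGroup E]
    [InnerProductSpace ℂ E] {T : E →L[ℂ] E} (hT : ∀ x, 0 ≤ ⟪x, T x⟫) : T.IsPositive := by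
  rw [isPositive_iff_complex]
  intro x
  have hx : 0 ≤ ⟪T x, x⟫ := by rw [← inner_conj_symm]; exact star_nonneg_iff.2 (hT x)
  exact ⟨(Complex.eq_re_of_ofReal_le hx).symm, (Complex.nonneg_iff.1 hx).1⟩

section CompactGroup

variable {G : Type*} [Group G] [TopologicalSpace G] [ContinuousMul G]
  [CompactSpace G] [MeasurableSpace G] [BorelSpace G]
  (μ : Measure G) [μ.IsMulLeftInvariant] [IsProbabilityMeasure μ]
  {V : Type*} [NormedAddCommGroup V] [InnerProductSpace ℂ V] [FiniteDimensional ℂ V]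
  {W : Type*} [NormedAddCommGroup W] [InnerProductSpace ℂ W] [FiniteDimensional ℂ W]
  {ρ : G →* (V →L[ℂ] V)} {τ : G →* (W →L[ℂ] W)}

theorem integral_trace_mul_inner_nonneg
    (hρ_unitary : ∀ (g : G) (v w : V), ⟪ρ g v, ρ g w⟫ = ⟪v, w⟫)
    (hρ_cont : ∀ v : V, Continuous fun g : G => ρ g v)
    (hτ_unitary : ∀ (g : G) (v w : W), ⟪τ g v, τ g w⟫ = ⟪v, w⟫)
    (hτ_cont : ∀ v : W, Continuous fun g : G => τ g v) (v : V) :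
    0 ≤ ∫ g, LinearMap.trace ℂ W (τ g : W →ₗ[ℂ] W) * ⟪v, ρ g v⟫ ∂μ := by
  let b := stdOrthonormalBasis ℂ W
  let F : G → PiLp 2 fun _ : Fin (Module.finrank ℂ W) => W ⊗[ℂ] V :=
    fun g => WithLp.toLp 2 fun i => τ g (b i) ⊗ₜ ρ g v
  have hF : Continuous F := by fun_prop
  refine integral_nonneg_of_inv_mul_eq_inner
    (hF.integrable_of_hasCompactSupport (.of_compactSpace F)) fun h g => ?_
  rw [trace_map_inv_mul hτ_unitary b, inner_map_inv_mul_apply hρ_unitary, Finset.sum_mul]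
  simp only [F, PiLp.inner_apply, TensorProduct.inner_tmul]

end CompactGroup

/-- For continuous unitary representations `ρ` (on `V`) and `τ` (on `W`) of a compact group `G`,
the operator `A = ∫ G χ_τ(g) • ρ(g) dμ(g)`, where `χ_τ(g) = tr τ(g)` is the character of `τ`,
is positive: it is self-adjoint and `⟪v, A v⟫` is a nonnegative real number for every `v`. -/
theorem character_weighted_haar_intertwiner_positive
    {G : Type*} [Group G] [TopologicalSpace G] [IsTopologicalGroup G]
    [CompactSpace G] [MeasurableSpace G] [BorelSpace G]
    (μ : Measure G) [Measure.IsHaarMeasure μ] [IsProbabilityMeasure μ]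
    {V : Type*} [NormedAddCommGroup V] [InnerProductSpace ℂ V] [FiniteDimensional ℂ V]
    {W : Type*} [NormedAddCommGroup W] [InnerProductSpace ℂ W] [FiniteDimensional ℂ W]
    (ρ : G →* (V →L[ℂ] V)) (τ : G →* (W →L[ℂ] W))
    (hρ_unitary : ∀ (g : G) (v w : V), ⟪ρ g v, ρ g w⟫ = ⟪v, w⟫)
    (hρ_cont : ∀ v : V, Continuous fun g : G => ρ g v)
    (hτ_unitary : ∀ (g : G) (v w : W), ⟪τ g v, τ g w⟫ = ⟪v, w⟫)
    (hτ_cont : ∀ v : W, Continuous fun g : G => τ g v) :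
    IsSelfAdjoint (∫ g, (LinearMap.trace ℂ W (τ g : W →ₗ[ℂ] W)) • ρ g ∂μ) ∧
      ∀ v : V, 0 ≤ ⟪v, (∫ g, (LinearMap.trace ℂ W (τ g : W →ₗ[ℂ] W)) • ρ g ∂μ) v⟫ := by
  have hχ : Continuous fun g => LinearMap.trace ℂ W (τ g : W →ₗ[ℂ] W) := by
    simp_rw [LinearMap.trace_eq_sum_inner _ (stdOrthonormalBasis ℂ W), ContinuousLinearMap.coe_coe]
    fun_prop
  have hint : Integrable (fun g => LinearMap.trace ℂ W (τ g : W →ₗ[ℂ] W) • ρ g) μ :=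
    (hχ.smul (continuous_clm_apply.2 hρ_cont)).integrable_of_hasCompactSupport
      (.of_compactSpace _)
  have hA (v : V) : 0 ≤ ⟪v, (∫ g, (LinearMap.trace ℂ W (τ g : W →ₗ[ℂ] W)) • ρ g ∂μ) v⟫ := by
    rw [ContinuousLinearMap.integral_apply hint,
      ← integral_inner (hint.apply_continuousLinearMap v)]
    simpa only [smul_apply, inner_smul_right] using
      integral_trace_mul_inner_nonneg μ hρ_unitary hρ_cont hτ_unitary hτ_cont v
  exact ⟨(ContinuousLinearMap.isPositive_of_inner_nonneg hA).isSelfAdjoint, hA⟩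
end

section
/- Let G be a compact topological group equipped with its Borel σ-algebra and let μ be the normalized Haar probability measure on G. Let σ₁ and σ₂ be continuous unitary matrix representations of G of dimensions n₁ and n₂, and let τ be a continuous unitary matrix representation of G with character χ_τ. Set A = ∫_G χ_τ(g) · σ₁(g) dμ(g) (an n₁×n₁ matrix) and T = ∫_G σ₁(g) ⊗ₖ σ₂(g) dμ(g) (an (n₁·n₂)×(n₁·n₂) matrix). Then the product (A ⊗ₖ I_{n₂}) * T is positive semidefinite. -/
/-! Write `P₁ = ∫ σ₁ ⊗ₖ τ` and `P₂ = ∫ σ₂ ⊗ₖ τ̄` for the Haar averages of the unitary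
representations `σ₁ ⊗ τ` and `σ₂ ⊗ τ̄`. Each is an orthogonal projection (Hermitian by
inversion invariance of `μ`, idempotent by left invariance), hence positive semidefinite, and so
is `P₁ ⊗ₖ P₂`. Right invariance gives `A σ₁(g) = ∫ χ_τ(h g⁻¹) σ₁(h) dh`, and expanding
`χ_τ(h g⁻¹) = ∑_{k,k'} τ(h)_{kk'} conj τ(g)_{kk'}` shows
`((A ⊗ₖ 1) T)_{(i,j),(i',j')} = ∑_{k,k'} P₁_{(i,k),(i',k')} P₂_{(j,k),(j',k')}`:
a compression of `P₁ ⊗ₖ P₂` along the vector `∑_k e_k ⊗ e_k`, hence positive semidefinite. -/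

open MeasureTheory Matrix
open scoped Kronecker ComplexOrder

namespace Matrix

variable {𝕜 : Type*} [RCLike 𝕜]

theorem PosSemidef.sum_sum_apply {β κ : Type*} [Fintype β] [DecidableEq β] [Fintype κ]
    {Y : Matrix (β × κ) (β × κ) 𝕜} (hY : Y.PosSemidef) :
    (of fun a b => ∑ k, ∑ k', Y (a, k) (b, k')).PosSemidef := by
  let V : Matrix (β × κ) β 𝕜 := of fun p b => if p.1 = b then 1 else 0
  convert hY.conjTranspose_mul_mul_same V using 1
  ext a b
  simp only [V, of_apply, mul_apply, conjTranspose_apply, RCLike.star_def,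
    MonoidWithZeroHom.map_ite_one_zero, ite_mul, one_mul, zero_mul, mul_ite, mul_one, mul_zero,
    Fintype.sum_prod_type, Finset.sum_comm (γ := β), Finset.sum_ite_eq', Finset.mem_univ,
    ↓reduceIte]
  rw [Finset.sum_comm]

theorem trace_mul_conjTranspose_eq_sum {R β κ : Type*} [Fintype β] [Fintype κ] [Semiring R]
    [StarRing R] (X Y : Matrix κ β R) : (X * Yᴴ).trace = ∑ k, ∑ j, X k j * star (Y k j) := by
  simp [trace, mul_apply]

section EntrywiseIntegral

variable {X : Type*} [MeasurableSpace X] (μ : Measure X) {ι κ ν : Type*}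

noncomputable def entrywiseIntegral (f : X → Matrix ι κ 𝕜) : Matrix ι κ 𝕜 :=
  of fun i j => ∫ x, f x i j ∂μ

@[simp]
theorem entrywiseIntegral_apply (f : X → Matrix ι κ 𝕜) (i : ι) (j : κ) :
    entrywiseIntegral μ f i j = ∫ x, f x i j ∂μ :=
  rfl

variable {μ}

theorem mul_entrywiseIntegral [Fintype κ] (M : Matrix ι κ 𝕜) {f : X → Matrix κ ν 𝕜}
    (hf : ∀ i j, Integrable (fun x => f x i j) μ) :
    M * entrywiseIntegral μ f = entrywiseIntegral μ fun x => M * f x := by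
  ext i j
  simp only [entrywiseIntegral_apply, mul_apply]
  rw [integral_finsetSum _ fun k _ => (hf k j).const_mul _]
  simp_rw [integral_const_mul]

theorem entrywiseIntegral_mul [Fintype κ] {f : X → Matrix ι κ 𝕜} (M : Matrix κ ν 𝕜)
    (hf : ∀ i j, Integrable (fun x => f x i j) μ) :
    entrywiseIntegral μ f * M = entrywiseIntegral μ fun x => f x * M := by
  ext i j
  simp only [entrywiseIntegral_apply, mul_apply]
  rw [integral_finsetSum _ fun k _ => (hf i k).mul_const _]
  simp_rw [integral_mul_const]

theorem conjTranspose_entrywiseIntegral (f : X → Matrix ι κ 𝕜) :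
    (entrywiseIntegral μ f)ᴴ = entrywiseIntegral μ fun x => (f x)ᴴ := by
  ext i j
  simp only [entrywiseIntegral_apply, conjTranspose_apply, RCLike.star_def, integral_conj]

theorem entrywiseIntegral_const [IsProbabilityMeasure μ] (M : Matrix ι κ 𝕜) :
    entrywiseIntegral μ (fun _ => M) = M := by
  ext i j
  simp

end EntrywiseIntegral

end Matrix

theorem integral_sum_sum {X E : Type*} [MeasurableSpace X] {μ : Measure X}
    [NormedAddCommGroup E] [NormedSpace ℝ E] {κ ν : Type*} [Fintype κ] [Fintype ν]
    {F : κ → ν → X → E} (hF : ∀ k l, Integrable (F k l) μ) :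
    ∫ x, ∑ k, ∑ l, F k l x ∂μ = ∑ k, ∑ l, ∫ x, F k l x ∂μ := by
  rw [integral_finsetSum _ fun k _ => integrable_finsetSum _ fun l _ => hF k l]
  simp_rw [integral_finsetSum _ fun l _ => hF _ l]

section CompactSpace

variable {X : Type*} [TopologicalSpace X] [CompactSpace X] [MeasurableSpace X]
  [OpensMeasurableSpace X] {μ : Measure X} [IsFiniteMeasure μ] {E : Type*} [NormedAddCommGroup E]

theorem Continuous.integrable_of_compactSpace {f : X → E} (hf : Continuous f) : Integrable f μ :=
  hf.integrable_of_hasCompactSupport (.of_compactSpace f)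

theorem Continuous.integrable_matrix_elem {ι κ : Type*} {f : X → Matrix ι κ E}
    (hf : Continuous f) (i : ι) (j : κ) : Integrable (fun x => f x i j) μ :=
  (hf.matrix_elem i j).integrable_of_compactSpace

end CompactSpace

section UnitaryRep

variable {G : Type*} [Monoid G] {ι κ : Type*} [Fintype ι] [DecidableEq ι] [Fintype κ]
  [DecidableEq κ]

def unitaryRepKronecker (σ : G →* unitaryGroup ι ℂ) (τ : G →* unitaryGroup κ ℂ) :
    G →* unitaryGroup (ι × κ) ℂ where
  toFun g := ⟨(σ g : Matrix ι ι ℂ) ⊗ₖ (τ g : Matrix κ κ ℂ), kronecker_mem_unitary (σ g).2 (τ g).2⟩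
  map_one' := Subtype.ext <| by simp only [map_one, OneMemClass.coe_one, one_kronecker_one]
  map_mul' g h := Subtype.ext <| by simp only [map_mul, Submonoid.coe_mul, mul_kronecker_mul]

def unitaryRepConj (τ : G →* unitaryGroup κ ℂ) : G →* unitaryGroup κ ℂ where
  toFun g := UnitaryGroup.map_star (τ g)
  map_one' := Subtype.ext <| by
    simp only [map_one, UnitaryGroup.map_star_coe, OneMemClass.coe_one, map_star_eq_one]
  map_mul' g h := Subtype.ext <| by
    simp only [map_mul, UnitaryGroup.map_star_coe, Submonoid.coe_mul]
    exact Matrix.map_mul (f := starRingEnd ℂ)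

@[simp]
theorem coe_unitaryRepKronecker (σ : G →* unitaryGroup ι ℂ) (τ : G →* unitaryGroup κ ℂ) (g : G) :
    (unitaryRepKronecker σ τ g : Matrix (ι × κ) (ι × κ) ℂ) =
      (σ g : Matrix ι ι ℂ) ⊗ₖ (τ g : Matrix κ κ ℂ) :=
  rfl

@[simp]
theorem coe_unitaryRepConj (τ : G →* unitaryGroup κ ℂ) (g : G) :
    (unitaryRepConj τ g : Matrix κ κ ℂ) = (τ g : Matrix κ κ ℂ).map star :=
  rfl

variable [TopologicalSpace G]

theorem continuous_unitaryRepKronecker {σ : G →* unitaryGroup ι ℂ} {τ : G →* unitaryGroup κ ℂ}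
    (hσ : Continuous fun g => (σ g : Matrix ι ι ℂ))
    (hτ : Continuous fun g => (τ g : Matrix κ κ ℂ)) :
    Continuous fun g => (unitaryRepKronecker σ τ g : Matrix (ι × κ) (ι × κ) ℂ) :=
  continuous_matrix fun _ _ => (hσ.matrix_elem _ _).mul (hτ.matrix_elem _ _)

theorem continuous_unitaryRepConj {τ : G →* unitaryGroup κ ℂ}
    (hτ : Continuous fun g => (τ g : Matrix κ κ ℂ)) :
    Continuous fun g => (unitaryRepConj τ g : Matrix κ κ ℂ) :=
  hτ.matrix_map continuous_star

end UnitaryRep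

theorem trace_unitaryRep_mul_inv {G κ : Type*} [Group G] [Fintype κ] [DecidableEq κ]
    (τ : G →* unitaryGroup κ ℂ) (g h : G) :
    (τ (h * g⁻¹) : Matrix κ κ ℂ).trace =
      ∑ k, ∑ k', (τ h : Matrix κ κ ℂ) k k' * star ((τ g : Matrix κ κ ℂ) k k') := by
  rw [map_mul, map_inv]
  exact trace_mul_conjTranspose_eq_sum _ _

section CompactGroup

variable {G : Type*} [Group G] [TopologicalSpace G] [IsTopologicalGroup G] [CompactSpace G]
  [MeasurableSpace G] [BorelSpace G] (μ : Measure G) [μ.IsHaarMeasure] [IsProbabilityMeasure μ]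

instance Measure.isMulRightInvariant_of_compactSpace : μ.IsMulRightInvariant := by
  refine ⟨fun g => ?_⟩
  have : IsProbabilityMeasure (μ.map (· * g)) :=
    Measure.isProbabilityMeasure_map (measurable_mul_const g).aemeasurable
  exact Measure.isHaarMeasure_eq_of_isProbabilityMeasure _ μ

instance Measure.isInvInvariant_of_compactSpace : μ.IsInvInvariant := by
  have : IsProbabilityMeasure μ.inv :=
    Measure.isProbabilityMeasure_map measurable_inv.aemeasurable
  have : μ.inv.IsHaarMeasure := { }
  exact ⟨Measure.isHaarMeasure_eq_of_isProbabilityMeasure _ μ⟩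

variable {μ} {ι κ : Type*} [Fintype ι] [DecidableEq ι] [Fintype κ] [DecidableEq κ]

section Projection

variable {ρ : G →* unitaryGroup ι ℂ}

theorem unitaryRep_mul_entrywiseIntegral (hρ : Continuous fun g => (ρ g : Matrix ι ι ℂ))
    (g : G) :
    (ρ g : Matrix ι ι ℂ) * entrywiseIntegral μ (fun h => ρ h) =
      entrywiseIntegral μ (fun h => ρ h) := by
  rw [mul_entrywiseIntegral _ hρ.integrable_matrix_elem]
  ext i j
  simpa only [entrywiseIntegral_apply, map_mul, Submonoid.coe_mul] using
    integral_mul_left_eq_self (fun h => (ρ h : Matrix ι ι ℂ) i j) g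

theorem entrywiseIntegral_unitaryRep_mul_self (hρ : Continuous fun g => (ρ g : Matrix ι ι ℂ)) :
    entrywiseIntegral μ (fun g => (ρ g : Matrix ι ι ℂ)) *
        entrywiseIntegral μ (fun g => (ρ g : Matrix ι ι ℂ)) =
      entrywiseIntegral μ (fun g => (ρ g : Matrix ι ι ℂ)) := by
  rw [entrywiseIntegral_mul _ hρ.integrable_matrix_elem]
  simp_rw [unitaryRep_mul_entrywiseIntegral hρ, entrywiseIntegral_const]

theorem isHermitian_entrywiseIntegral_unitaryRep :
    (entrywiseIntegral μ (fun g => (ρ g : Matrix ι ι ℂ))).IsHermitian := by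
  rw [IsHermitian, conjTranspose_entrywiseIntegral]
  ext i j
  have hinv (g : G) : (ρ g⁻¹ : Matrix ι ι ℂ) = (ρ g : Matrix ι ι ℂ)ᴴ := by rw [map_inv]; rfl
  simpa only [entrywiseIntegral_apply, hinv] using
    integral_inv_eq_self (fun g => (ρ g : Matrix ι ι ℂ) i j) μ

theorem posSemidef_entrywiseIntegral_unitaryRep
    (hρ : Continuous fun g => (ρ g : Matrix ι ι ℂ)) :
    (entrywiseIntegral μ (fun g => (ρ g : Matrix ι ι ℂ))).PosSemidef := by
  have h := posSemidef_conjTranspose_mul_self (entrywiseIntegral μ (fun g => (ρ g : Matrix ι ι ℂ)))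
  rwa [isHermitian_entrywiseIntegral_unitaryRep.eq,
    entrywiseIntegral_unitaryRep_mul_self hρ] at h

end Projection

theorem entrywiseIntegral_smul_unitaryRep_mul {χ : G → ℂ} (hχ : Continuous χ)
    {σ : G →* unitaryGroup ι ℂ} (hσ : Continuous fun g => (σ g : Matrix ι ι ℂ)) (g : G) :
    entrywiseIntegral μ (fun h => χ h • (σ h : Matrix ι ι ℂ)) * σ g =
      entrywiseIntegral μ (fun h => χ (h * g⁻¹) • (σ h : Matrix ι ι ℂ)) := by
  rw [entrywiseIntegral_mul (f := fun h => χ h • (σ h : Matrix ι ι ℂ)) _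
    (hχ.smul hσ).integrable_matrix_elem]
  ext i j
  simpa using
    integral_mul_right_eq_self (μ := μ) (fun h => (χ (h * g⁻¹) • (σ h : Matrix ι ι ℂ)) i j) g

variable {ι₂ : Type*} [Fintype ι₂] [DecidableEq ι₂]
  {σ₁ : G →* unitaryGroup ι ℂ} {σ₂ : G →* unitaryGroup ι₂ ℂ} {τ : G →* unitaryGroup κ ℂ}
  (hσ₁ : Continuous fun g => (σ₁ g : Matrix ι ι ℂ))
  (hσ₂ : Continuous fun g => (σ₂ g : Matrix ι₂ ι₂ ℂ))
  (hτ : Continuous fun g => (τ g : Matrix κ κ ℂ))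
include hσ₁ hτ

theorem entrywiseIntegral_trace_smul_mul_apply (g : G) (i i' : ι) :
    (entrywiseIntegral μ (fun h => (τ h : Matrix κ κ ℂ).trace • (σ₁ h : Matrix ι ι ℂ)) *
        σ₁ g) i i' =
      ∑ k, ∑ k',
        entrywiseIntegral μ (fun h => (unitaryRepKronecker σ₁ τ h : Matrix (ι × κ) (ι × κ) ℂ))
          (i, k) (i', k') * star ((τ g : Matrix κ κ ℂ) k k') := by
  rw [entrywiseIntegral_smul_unitaryRep_mul hτ.matrix_trace hσ₁]
  simp only [entrywiseIntegral_apply, Matrix.smul_apply, smul_eq_mul, trace_unitaryRep_mul_inv,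
    Finset.sum_mul]
  rw [integral_sum_sum fun k k' => Continuous.integrable_of_compactSpace <| by
    exact ((hτ.matrix_elem k k').mul continuous_const).mul (hσ₁.matrix_elem i i')]
  refine Finset.sum_congr rfl fun k _ => Finset.sum_congr rfl fun k' _ => ?_
  rw [← integral_mul_const]
  congr 1 with h
  simp only [coe_unitaryRepKronecker, kroneckerMap_apply]
  ring

include hσ₂

theorem entrywiseIntegral_trace_smul_kronecker_one_mul :
    (entrywiseIntegral μ (fun g => (τ g : Matrix κ κ ℂ).trace • (σ₁ g : Matrix ι ι ℂ)) ⊗ₖ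
          (1 : Matrix ι₂ ι₂ ℂ)) *
        entrywiseIntegral μ (fun g => (σ₁ g : Matrix ι ι ℂ) ⊗ₖ (σ₂ g : Matrix ι₂ ι₂ ℂ)) =
      of fun a b => ∑ k, ∑ k',
        (entrywiseIntegral μ (fun g => (unitaryRepKronecker σ₁ τ g : Matrix (ι × κ) (ι × κ) ℂ)) ⊗ₖ
          entrywiseIntegral μ (fun g =>
            (unitaryRepKronecker σ₂ (unitaryRepConj τ) g : Matrix (ι₂ × κ) (ι₂ × κ) ℂ)))
          ((a.1, k), (a.2, k)) ((b.1, k'), (b.2, k')) := by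
  rw [mul_entrywiseIntegral (f := fun g => (σ₁ g : Matrix ι ι ℂ) ⊗ₖ (σ₂ g : Matrix ι₂ ι₂ ℂ)) _
    (continuous_unitaryRepKronecker hσ₁ hσ₂).integrable_matrix_elem]
  simp_rw [← mul_kronecker_mul, one_mul]
  ext ⟨i, j⟩ ⟨i', j'⟩
  simp_rw [entrywiseIntegral_apply, of_apply, kroneckerMap_apply,
    entrywiseIntegral_trace_smul_mul_apply hσ₁ hτ, Finset.sum_mul]
  rw [integral_sum_sum fun k k' => Continuous.integrable_of_compactSpace <| by
    exact (continuous_const.mul (hτ.matrix_elem k k').star).mul (hσ₂.matrix_elem j j')]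
  refine Finset.sum_congr rfl fun k _ => Finset.sum_congr rfl fun k' _ => ?_
  simp only [entrywiseIntegral_apply]
  rw [← integral_const_mul]
  congr 1 with g
  simp only [coe_unitaryRepKronecker, coe_unitaryRepConj, kroneckerMap_apply, map_apply]
  ring

end CompactGroup

/-- For continuous unitary matrix representations `σ₁, σ₂, τ` of a compact group `G`, with
`A = ∫ χ_τ(g) σ₁(g) dμ(g)` and `T = ∫ σ₁(g) ⊗ₖ σ₂(g) dμ(g)`, the product
`(A ⊗ₖ 1) * T` is positive semidefinite. -/
theorem character_matrix_kronecker_haar_posSemidef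
    {G : Type*} [Group G] [TopologicalSpace G] [IsTopologicalGroup G]
    [CompactSpace G] [MeasurableSpace G] [BorelSpace G]
    (μ : Measure G) [Measure.IsHaarMeasure μ] [IsProbabilityMeasure μ]
    {n₁ n₂ m : ℕ}
    (σ₁ : G →* Matrix.unitaryGroup (Fin n₁) ℂ)
    (σ₂ : G →* Matrix.unitaryGroup (Fin n₂) ℂ)
    (τ : G →* Matrix.unitaryGroup (Fin m) ℂ)
    (hσ₁ : Continuous fun g : G => (σ₁ g : Matrix (Fin n₁) (Fin n₁) ℂ))
    (hσ₂ : Continuous fun g : G => (σ₂ g : Matrix (Fin n₂) (Fin n₂) ℂ))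
    (hτ : Continuous fun g : G => (τ g : Matrix (Fin m) (Fin m) ℂ))
    (A : Matrix (Fin n₁) (Fin n₁) ℂ)
    (hA : A = Matrix.of fun i i' : Fin n₁ =>
      ∫ g, (τ g : Matrix (Fin m) (Fin m) ℂ).trace *
        (σ₁ g : Matrix (Fin n₁) (Fin n₁) ℂ) i i' ∂μ)
    (T : Matrix (Fin n₁ × Fin n₂) (Fin n₁ × Fin n₂) ℂ)
    (hT : T = Matrix.of fun a b : Fin n₁ × Fin n₂ =>
      ∫ g, (((σ₁ g : Matrix (Fin n₁) (Fin n₁) ℂ) ⊗ₖ (σ₂ g : Matrix (Fin n₂) (Fin n₂) ℂ)) a b)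
        ∂μ) :
    ((A ⊗ₖ (1 : Matrix (Fin n₂) (Fin n₂) ℂ)) * T).PosSemidef := by
  have hA' : A = entrywiseIntegral μ fun g =>
      (τ g : Matrix (Fin m) (Fin m) ℂ).trace • (σ₁ g : Matrix (Fin n₁) (Fin n₁) ℂ) := hA
  have hT' : T = entrywiseIntegral μ fun g =>
      (σ₁ g : Matrix (Fin n₁) (Fin n₁) ℂ) ⊗ₖ (σ₂ g : Matrix (Fin n₂) (Fin n₂) ℂ) := hT
  rw [hA', hT', entrywiseIntegral_trace_smul_kronecker_one_mul hσ₁ hσ₂ hτ]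
  have hP₁ := posSemidef_entrywiseIntegral_unitaryRep (μ := μ)
    (continuous_unitaryRepKronecker hσ₁ hτ)
  have hP₂ := posSemidef_entrywiseIntegral_unitaryRep (μ := μ)
    (continuous_unitaryRepKronecker hσ₂ (continuous_unitaryRepConj hτ))
  simpa only [submatrix_apply] using
    ((hP₁.kronecker hP₂).submatrix fun p : (Fin n₁ × Fin n₂) × Fin m =>
      ((p.1.1, p.2), (p.1.2, p.2))).sum_sum_apply
end

section
/- Let G be a compact topological group equipped with its Borel σ-algebra and let μ be the normalized Haar probability measure on G. Fix k ≥ 1, for each i ∈ Fin k let τᵢ be a continuous unitary matrix representation of G with character χ_{τᵢ}, and for each pair i < j in Fin k let ρ_{ij} be a continuous unitary matrix representation of G with character χ_{ρ_{ij}}. Then the complex number I = ∫_{G^k} (∏_{i} χ_{τᵢ}(gᵢ)) · (∏_{i<j} χ_{ρ_{ij}}(gᵢ · gⱼ⁻¹)) dμ^{⊗k}(g) is a nonnegative real number: its imaginary part is 0 and its real part is ≥ 0. -/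
/-!
The integrand `Φ` on `G^k` satisfies `Φ (x⁻¹ * y) = ∑ₛ conj (fₛ x) * fₛ y` for finitely many
bounded measurable `fₛ`. For a unitary representation `σ`, `tr σ (x⁻¹ y) = tr ((σ x)ᴴ σ y)` is such
a sum over matrix entries; since a character is a class function, `(a, b) ↦ tr σ (a b⁻¹)` on `G × G`
has one as well, with `fₛ (a, b)` the entries of `σ (a b⁻¹)`. Such decompositions multiply and pull
back along the homomorphisms `g ↦ (gᵢ, gⱼ)` and `g ↦ (gᵢ, 1)`.
By left invariance, `∫ Φ = ∫∫ Φ (x⁻¹ y) dy dx = ∑ₛ |∫ fₛ|² ≥ 0`.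
-/

open MeasureTheory
open scoped ComplexOrder Matrix ComplexConjugate

section GramDecomposition

variable {H K : Type*} [Group H] [MeasurableSpace H] [Group K] [MeasurableSpace K]

def HasGramDecomposition (Φ : H → ℂ) : Prop :=
  ∃ (ι : Type) (_ : Fintype ι) (f : ι → H → ℂ),
    (∀ s, Measurable (f s) ∧ ∃ C, ∀ x, ‖f s x‖ ≤ C) ∧
    ∀ x y, Φ (x⁻¹ * y) = ∑ s, conj (f s x) * f s y

namespace HasGramDecomposition

theorem one : HasGramDecomposition (fun _ : H => (1 : ℂ)) :=
  ⟨Unit, inferInstance, fun _ _ => 1, fun _ => ⟨measurable_const, 1, fun _ => by simp⟩,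
    fun _ _ => by simp⟩

theorem mul {Φ Ψ : H → ℂ} (hΦ : HasGramDecomposition Φ) (hΨ : HasGramDecomposition Ψ) :
    HasGramDecomposition fun x => Φ x * Ψ x := by
  obtain ⟨ι, _, f, hf, hΦ⟩ := hΦ
  obtain ⟨κ, _, g, hg, hΨ⟩ := hΨ
  refine ⟨ι × κ, inferInstance, fun s x => f s.1 x * g s.2 x, fun s => ?_, fun x y => ?_⟩
  · obtain ⟨hf_meas, C, hC⟩ := hf s.1
    obtain ⟨hg_meas, D, hD⟩ := hg s.2
    refine ⟨hf_meas.mul hg_meas, C * D, fun x => ?_⟩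
    rw [norm_mul]
    exact mul_le_mul (hC x) (hD x) (norm_nonneg _) ((norm_nonneg _).trans (hC x))
  · dsimp only
    rw [hΦ, hΨ, Finset.sum_mul_sum, ← Finset.univ_product_univ, Finset.sum_product]
    simp only [map_mul]
    exact Finset.sum_congr rfl fun _ _ => Finset.sum_congr rfl fun _ _ => by ring

theorem prod {ι : Type*} (t : Finset ι) {Φ : ι → H → ℂ}
    (hΦ : ∀ i ∈ t, HasGramDecomposition (Φ i)) :
    HasGramDecomposition fun x => ∏ i ∈ t, Φ i x := by
  simp_rw [← Finset.prod_apply]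
  exact Finset.prod_induction _ _ (fun _ _ => mul) one hΦ

theorem comp_monoidHom {Φ : K → ℂ} (hΦ : HasGramDecomposition Φ) (φ : H →* K)
    (hφ : Measurable φ) : HasGramDecomposition fun x => Φ (φ x) := by
  obtain ⟨ι, _, f, hf, hΦ⟩ := hΦ
  refine ⟨ι, inferInstance, fun s x => f s (φ x), fun s => ?_, fun x y => ?_⟩
  · obtain ⟨hf_meas, C, hC⟩ := hf s
    exact ⟨hf_meas.comp hφ, C, fun x => hC (φ x)⟩
  · simp only [map_mul, map_inv, hΦ]

theorem integral_nonneg [MeasurableMul H] {Φ : H → ℂ} (hΦ : HasGramDecomposition Φ)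
    (μ : Measure H) [μ.IsMulLeftInvariant] [IsProbabilityMeasure μ] :
    0 ≤ ∫ x, Φ x ∂μ := by
  obtain ⟨ι, _, f, hf, hΦ⟩ := hΦ
  have hint : ∀ s, Integrable (f s) μ := fun s => by
    obtain ⟨hf_meas, C, hC⟩ := hf s
    exact .of_bound hf_meas.aestronglyMeasurable C (.of_forall hC)
  have hint_conj : ∀ s, Integrable (fun x => conj (f s x)) μ :=
    fun s => Complex.conjCLE.toContinuousLinearMap.integrable_comp (hint s)
  have : ∫ x, Φ x ∂μ = ∑ s, conj (∫ x, f s x ∂μ) * ∫ x, f s x ∂μ := calc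
    ∫ x, Φ x ∂μ = ∫ x, ∫ y, Φ (x⁻¹ * y) ∂μ ∂μ := by
      simp only [integral_mul_left_eq_self, integral_const, probReal_univ, one_smul]
    _ = ∫ x, ∑ s, conj (f s x) * ∫ y, f s y ∂μ ∂μ := by
      simp only [hΦ, integral_finsetSum _ fun s _ => (hint s).const_mul _, integral_const_mul]
    _ = ∑ s, conj (∫ x, f s x ∂μ) * ∫ x, f s x ∂μ := by
      simp only [integral_finsetSum _ fun s _ => (hint_conj s).mul_const _, integral_mul_const,
        integral_conj]
  rw [this]
  exact Finset.sum_nonneg fun s _ => star_mul_self_nonneg _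

end HasGramDecomposition

end GramDecomposition

section UnitaryRepresentation

variable {G : Type*} [Group G] {n : Type} [Fintype n] [DecidableEq n]

theorem conjTranspose_unitary_map (σ : G →* Matrix.unitaryGroup n ℂ) (g : G) :
    (σ g : Matrix n n ℂ)ᴴ = σ g⁻¹ := by
  rw [map_inv, ← Unitary.star_eq_inv, Unitary.coe_star, Matrix.star_eq_conjTranspose]

theorem trace_unitary_map_mul_comm (σ : G →* Matrix.unitaryGroup n ℂ) (g h : G) :
    (σ (g * h) : Matrix n n ℂ).trace = (σ (h * g) : Matrix n n ℂ).trace := by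
  rw [map_mul, map_mul, MulMemClass.coe_mul, MulMemClass.coe_mul, Matrix.trace_mul_comm]

variable [TopologicalSpace G] [MeasurableSpace G] [OpensMeasurableSpace G]

theorem hasGramDecomposition_trace_mul_inv (σ : G →* Matrix.unitaryGroup n ℂ)
    (hσ : Continuous fun g => (σ g : Matrix n n ℂ)) :
    HasGramDecomposition fun a : G × G => (σ (a.1 * a.2⁻¹) : Matrix n n ℂ).trace := by
  refine ⟨n × n, inferInstance, fun s a => (σ (a.1 * a.2⁻¹) : Matrix n n ℂ).vec s,
    fun s => ⟨?_, 1, fun a => entry_norm_bound_of_unitary (σ _).2 _ _⟩, fun x y => ?_⟩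
  · have hentry : ∀ i j, Measurable fun g => (σ g : Matrix n n ℂ) i j :=
      fun i j => (hσ.matrix_elem i j).measurable
    simp only [Matrix.vec, map_mul, MulMemClass.coe_mul, ← conjTranspose_unitary_map,
      Matrix.mul_apply, Matrix.conjTranspose_apply]
    exact Finset.measurable_sum _ fun c _ => ((hentry _ _).comp measurable_fst).mul
      (continuous_star.measurable.comp ((hentry _ _).comp measurable_snd))
  · change _ = star (Matrix.vec _) ⬝ᵥ Matrix.vec _
    have hconj : (x.1 * x.2⁻¹)⁻¹ * (y.1 * y.2⁻¹)
        = x.2 * ((x⁻¹ * y).1 * (x⁻¹ * y).2⁻¹ * x.2⁻¹) := by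
      simp only [Prod.fst_mul, Prod.snd_mul, Prod.fst_inv, Prod.snd_inv]
      group
    rw [Matrix.star_vec_dotProduct_vec, conjTranspose_unitary_map, ← MulMemClass.coe_mul,
      ← map_mul, hconj, trace_unitary_map_mul_comm, inv_mul_cancel_right]

end UnitaryRepresentation

theorem closed_spin_network_evaluation_nonneg_general
    {G : Type*} [Group G] [TopologicalSpace G] [IsTopologicalGroup G]
    [MeasurableSpace G] [BorelSpace G]
    (μ : Measure G) [Measure.IsHaarMeasure μ] [IsProbabilityMeasure μ]
    {k : ℕ}
    {m : Fin k → ℕ} {p : Fin k → Fin k → ℕ}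
    (τ : (i : Fin k) → G →* Matrix.unitaryGroup (Fin (m i)) ℂ)
    (ρ : (i j : Fin k) → G →* Matrix.unitaryGroup (Fin (p i j)) ℂ)
    (hτ : ∀ i, Continuous fun g : G => (τ i g : Matrix (Fin (m i)) (Fin (m i)) ℂ))
    (hρ : ∀ i j, Continuous fun g : G => (ρ i j g : Matrix (Fin (p i j)) (Fin (p i j)) ℂ)) :
    0 ≤ ∫ g : Fin k → G,
        (∏ i : Fin k, (τ i (g i) : Matrix (Fin (m i)) (Fin (m i)) ℂ).trace) *
        (∏ e ∈ Finset.univ.filter (fun e : Fin k × Fin k => e.1 < e.2),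
          (ρ e.1 e.2 (g e.1 * (g e.2)⁻¹) : Matrix (Fin (p e.1 e.2)) (Fin (p e.1 e.2)) ℂ).trace)
        ∂(Measure.pi fun _ : Fin k => μ) := by
  have hvertex : ∀ i, HasGramDecomposition fun g : Fin k → G =>
      (τ i (g i) : Matrix (Fin (m i)) (Fin (m i)) ℂ).trace := fun i => by
    simpa only [MonoidHom.coe_comp, Function.comp_apply, MonoidHom.inl_apply,
      Pi.evalMonoidHom_apply, inv_one, mul_one] using
      (hasGramDecomposition_trace_mul_inv (τ i) (hτ i)).comp_monoidHom
        ((MonoidHom.inl G G).comp (Pi.evalMonoidHom (fun _ : Fin k => G) i))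
        ((measurable_pi_apply i).prodMk measurable_const)
  have hedge : ∀ e : Fin k × Fin k, HasGramDecomposition fun g : Fin k → G =>
      (ρ e.1 e.2 (g e.1 * (g e.2)⁻¹) : Matrix (Fin (p e.1 e.2)) (Fin (p e.1 e.2)) ℂ).trace :=
    fun e => by
      simpa only [MonoidHom.prod_apply, Pi.evalMonoidHom_apply] using
        (hasGramDecomposition_trace_mul_inv (ρ e.1 e.2) (hρ e.1 e.2)).comp_monoidHom
          ((Pi.evalMonoidHom (fun _ : Fin k => G) e.1).prod
            (Pi.evalMonoidHom (fun _ : Fin k => G) e.2))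
          ((measurable_pi_apply e.1).prodMk (measurable_pi_apply e.2))
  exact ((HasGramDecomposition.prod _ fun i _ => hvertex i).mul
    (HasGramDecomposition.prod _ fun e _ => hedge e)).integral_nonneg _

/-- The evaluation of the closed spin network built from `k` Haar intertwiners, with one
closed loop labeled `τᵢ` at each intertwiner and one closed loop labeled `ρᵢⱼ` linking each
pair of intertwiners, namely
`I = ∫_{G^k} (∏ᵢ χ_{τᵢ}(gᵢ)) (∏_{i<j} χ_{ρᵢⱼ}(gᵢ gⱼ⁻¹)) dμ^{⊗k}(g)`,
is a nonnegative real number (in the partial order of `ℂ`: imaginary part `0`,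
real part `≥ 0`). -/
theorem closed_spin_network_evaluation_nonneg
    {G : Type*} [Group G] [TopologicalSpace G] [IsTopologicalGroup G]
    [CompactSpace G] [MeasurableSpace G] [BorelSpace G]
    (μ : Measure G) [Measure.IsHaarMeasure μ] [IsProbabilityMeasure μ]
    {k : ℕ} (hk : 1 ≤ k)
    {m : Fin k → ℕ} {p : Fin k → Fin k → ℕ}
    (τ : (i : Fin k) → G →* Matrix.unitaryGroup (Fin (m i)) ℂ)
    (ρ : (i j : Fin k) → G →* Matrix.unitaryGroup (Fin (p i j)) ℂ)
    (hτ : ∀ i, Continuous fun g : G => (τ i g : Matrix (Fin (m i)) (Fin (m i)) ℂ))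
    (hρ : ∀ i j, Continuous fun g : G => (ρ i j g : Matrix (Fin (p i j)) (Fin (p i j)) ℂ)) :
    0 ≤ ∫ g : Fin k → G,
        (∏ i : Fin k, (τ i (g i) : Matrix (Fin (m i)) (Fin (m i)) ℂ).trace) *
        (∏ e ∈ Finset.univ.filter (fun e : Fin k × Fin k => e.1 < e.2),
          (ρ e.1 e.2 (g e.1 * (g e.2)⁻¹) : Matrix (Fin (p e.1 e.2)) (Fin (p e.1 e.2)) ℂ).trace)
        ∂(Measure.pi fun _ : Fin k => μ) :=
  closed_spin_network_evaluation_nonneg_general μ τ ρ hτ hρ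
end
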